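/- arXiv:2109.10968 — 2 statements merged into one kernel-verified Lean document; each statement's English description precedes it below -/
import Mathlib

section
/- For every pair of lotteries i, j ∈ L: ∑_{ω∈Ω} P ω · U i ω ≥ ∑_{ω∈Ω} P ω · U j ω if and only if ∑_{ω∈Ω} P ω · Uᵀ i ω ≥ ∑_{ω∈Ω} P ω · Uᵀ j ω. That is, when the outcome of every lottery is always learned ex post, a regret averse decision maker (κ > 0) and a regret neutral one (κ = 0) rank lotteries identically. -/
/-!
Regret `max_ℓ' U ℓ' ω - U ℓ ω` is measured against a benchmark that is the same for every
lottery, so `Uᵀ ℓ ω = (1 + κ) U ℓ ω - κ max_ℓ' U ℓ' ω` is a positive affine transform of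
`U ℓ ω` whose shift depends on the state but not on the lottery. Taking expectations, the
shift contributes the same constant to every lottery and the factor `1 + κ > 0` preserves order.
-/

open Finset

theorem Finset.sum_mul_affine {ι : Type*} (s : Finset ι) (p f c : ι → ℝ) (a : ℝ) :
    ∑ x ∈ s, p x * (a * f x + c x) = a * ∑ x ∈ s, p x * f x + ∑ x ∈ s, p x * c x := by
  rw [mul_sum, ← sum_add_distrib]
  exact sum_congr rfl fun x _ => by ring

theorem Finset.sum_mul_affine_le_sum_mul_affine_iff {ι : Type*} (s : Finset ι)
    (p f g c : ι → ℝ) {a : ℝ} (ha : 0 < a) :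
    ∑ x ∈ s, p x * (a * f x + c x) ≤ ∑ x ∈ s, p x * (a * g x + c x) ↔
      ∑ x ∈ s, p x * f x ≤ ∑ x ∈ s, p x * g x := by
  rw [sum_mul_affine, sum_mul_affine, add_le_add_iff_right, mul_le_mul_iff_of_pos_left ha]

theorem regret_equivalent_general
    {Ω L : Type*} [Fintype Ω] [Fintype L] [Nonempty L]
    (P : Ω → ℝ)
    (U : L → Ω → ℝ) (κ : ℝ) (hκ : 0 ≤ κ)
    (UT : L → Ω → ℝ)
    (hUT : ∀ (ℓ : L) (ω : Ω),
      UT ℓ ω = U ℓ ω -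
        κ * (Finset.univ.sup' Finset.univ_nonempty (fun ℓ' => U ℓ' ω) - U ℓ ω)) :
    ∀ i j : L,
      (∑ ω, P ω * U i ω ≥ ∑ ω, P ω * U j ω) ↔
      (∑ ω, P ω * UT i ω ≥ ∑ ω, P ω * UT j ω) := by
  intro i j
  set best : Ω → ℝ := fun ω => univ.sup' univ_nonempty (fun ℓ' => U ℓ' ω)
  have hUT_affine : ∀ ℓ ω, UT ℓ ω = (1 + κ) * U ℓ ω + -κ * best ω := fun ℓ ω => by
    rw [hUT]; ring
  simp only [ge_iff_le, hUT_affine]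
  exact (sum_mul_affine_le_sum_mul_affine_iff _ _ _ _ _ (by linarith)).symm

/-- **Theorem 1 (regret equivalence).** When the outcome of every lottery is always
learned ex post, a regret averse decision maker (`κ > 0`) and a regret neutral one
(`κ = 0`) rank lotteries identically: for every pair of lotteries `i, j`,
`𝔼[U i] ≥ 𝔼[U j] ↔ 𝔼[Uᵀ i] ≥ 𝔼[Uᵀ j]`, where
`Uᵀ ℓ ω = U ℓ ω - κ * (max_{ℓ'} U ℓ' ω - U ℓ ω)`. -/
theorem regret_equivalent
    {Ω L : Type*} [Fintype Ω] [Fintype L] [Nonempty Ω] [Nonempty L]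
    (P : Ω → ℝ) (hPpos : ∀ ω, 0 < P ω) (hPsum : ∑ ω, P ω = 1)
    (U : L → Ω → ℝ) (κ : ℝ) (hκ : 0 ≤ κ)
    (UT : L → Ω → ℝ)
    (hUT : ∀ (ℓ : L) (ω : Ω),
      UT ℓ ω = U ℓ ω -
        κ * (Finset.univ.sup' Finset.univ_nonempty (fun ℓ' => U ℓ' ω) - U ℓ ω)) :
    ∀ i j : L,
      (∑ ω, P ω * U i ω ≥ ∑ ω, P ω * U j ω) ↔
      (∑ ω, P ω * UT i ω ≥ ∑ ω, P ω * UT j ω) :=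
  regret_equivalent_general P U κ hκ UT hUT
end

section
/- Suppose the observation correspondences satisfy O'' k ⊆ O' k for every lottery k ∈ L (so the environment with O' is more informative than the one with O''). Then for every lottery k ∈ L, the expected total utility of choosing k in the more informative environment is no higher than in the less informative one: ∑_{ω∈Ω} P ω · Uᵀ_{O'} k ω ≤ ∑_{ω∈Ω} P ω · Uᵀ_{O''} k ω. That is, a regret averse individual never prefers a more informative ex-post information environment. -/
/-!
Observing more lotteries can only raise the best ex-post outcome, hence the regret
`max_{h ∈ O k} U h ω - U k ω`; with `κ ≥ 0` this lowers the total utility in every state,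
and averaging with nonnegative weights preserves the inequality.
-/

theorem totalUtility_le_of_subset {Ω L : Type*} (U : L → Ω → ℝ) {κ : ℝ} (hκ : 0 ≤ κ)
    {s t : Finset L} (hs : s.Nonempty) (hst : s ⊆ t) (k : L) (ω : Ω) :
    U k ω - κ * (t.sup' (hs.mono hst) (fun h => U h ω) - U k ω) ≤
      U k ω - κ * (s.sup' hs (fun h => U h ω) - U k ω) := by
  have hmax : s.sup' hs (fun h => U h ω) ≤ t.sup' (hs.mono hst) (fun h => U h ω) :=
    Finset.sup'_mono _ hst hs
  gcongr

theorem more_informative_never_preferred_general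
    {Ω L : Type*} [Fintype Ω]
    (P : Ω → ℝ) (hPpos : ∀ ω, 0 < P ω)
    (U : L → Ω → ℝ) (κ : ℝ) (hκ : 0 ≤ κ)
    (O' O'' : L → Finset L)
    (hO' : ∀ k, k ∈ O' k) (hO'' : ∀ k, k ∈ O'' k)
    (hsub : ∀ k, O'' k ⊆ O' k) :
    ∀ k : L,
      ∑ ω, P ω * (U k ω - κ * ((O' k).sup' ⟨k, hO' k⟩ (fun h => U h ω) - U k ω)) ≤
      ∑ ω, P ω * (U k ω - κ * ((O'' k).sup' ⟨k, hO'' k⟩ (fun h => U h ω) - U k ω)) := by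
  intro k
  exact Finset.sum_le_sum fun ω _ => mul_le_mul_of_nonneg_left
    (totalUtility_le_of_subset U hκ ⟨k, hO'' k⟩ (hsub k) k ω) (hPpos ω).le

/-- **Theorem 2 (ignorance is bliss).** If `O'' k ⊆ O' k` for every lottery `k`
(so the ex-post information environment given by `O'` is more informative than the
one given by `O''`), then for every lottery `k` the expected total utility of
choosing `k` in the more informative environment is no higher than in the less
informative one. Here `Uᵀ_O k ω = U k ω − κ·(max_{h ∈ O k} U h ω − U k ω)`. -/
theorem more_informative_never_preferred
    {Ω L : Type*} [Fintype Ω] [Fintype L] [Nonempty Ω] [Nonempty L]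
    (P : Ω → ℝ) (hPpos : ∀ ω, 0 < P ω) (hPsum : ∑ ω, P ω = 1)
    (U : L → Ω → ℝ) (κ : ℝ) (hκ : 0 ≤ κ)
    (O' O'' : L → Finset L)
    (hO' : ∀ k, k ∈ O' k) (hO'' : ∀ k, k ∈ O'' k)
    (hsub : ∀ k, O'' k ⊆ O' k) :
    ∀ k : L,
      ∑ ω, P ω * (U k ω - κ * ((O' k).sup' ⟨k, hO' k⟩ (fun h => U h ω) - U k ω)) ≤
      ∑ ω, P ω * (U k ω - κ * ((O'' k).sup' ⟨k, hO'' k⟩ (fun h => U h ω) - U k ω)) :=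
  more_informative_never_preferred_general P hPpos U κ hκ O' O'' hO' hO'' hsub
end
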